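/- The associahedron term set K_4, consisting of the faces (p, q) in the Saneblidze–Umble diagonal term set Δ_4 with both p and q derived consecutive, has exactly 22 elements. -/

import Mathlib

/-- Split a list into maximal runs with respect to the relation `r`. -/
def splitRuns {α : Type*} (r : α → α → Bool) : List α → List (List α)
  | [] => []
  | [x] => [[x]]
  | x :: y :: rest =>
    match splitRuns r (y :: rest) with
    | [] => [[x]]
    | s :: ss => if r x y then (x :: s) :: ss else [x] :: s :: ss

/-- The word `σ(1) σ(2) … σ(n)` of a permutation of `{1,…,n}`. -/
def permWord (n : ℕ) (σ : Equiv.Perm (Fin n)) : List ℕ :=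
  List.ofFn (fun i => (σ i : ℕ) + 1)

/-- A face: a pair of ordered partitions, each a list of blocks. -/
abbrev Face := List (Finset ℕ) × List (Finset ℕ)

/-- The step matrix face of a permutation: the maximal decreasing runs of its word
(as sets, in order of occurrence) paired with the maximal increasing runs. -/
def stepFace (n : ℕ) (σ : Equiv.Perm (Fin n)) : Face :=
  ((splitRuns (fun a b => decide (b < a)) (permWord n σ)).map List.toFinset,
   (splitRuns (fun a b => decide (a < b)) (permWord n σ)).map List.toFinset)

/-- `π` is an ordered partition of `{1,…,n}`: a finite sequence of nonempty pairwise
disjoint subsets whose union is `{1,…,n}`. -/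
def IsOrderedPartition (n : ℕ) (π : List (Finset ℕ)) : Prop :=
  (∀ b ∈ π, b.Nonempty) ∧ π.Pairwise Disjoint ∧ π.foldr (· ∪ ·) ∅ = Finset.Icc 1 n

/-- The `M`-shift at (0-based) index `j`: remove `M` from block `j` and adjoin it to
block `j+1`. -/
def blockShift (π : List (Finset ℕ)) (j : ℕ) (M : Finset ℕ) : List (Finset ℕ) :=
  (π.set j (π.getD j ∅ \ M)).set (j + 1) (π.getD (j + 1) ∅ ∪ M)

/-- `M` is an admissible subset of the `j`-th block of `π` with respect to `μ`:
`M` is a nonempty proper subset of `π_j` (with `j` not the last index),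
`min M > max π_{j+1}`, and if `min M ∈ μ_{k₀}` then `π_{j+1}` is disjoint from
`μ_{k₀} ∪ … ∪ μ_r`. -/
def Admissible (π μ : List (Finset ℕ)) (j : ℕ) (M : Finset ℕ) : Prop :=
  j + 1 < π.length ∧ M.Nonempty ∧ M ⊂ π.getD j ∅ ∧
    (∀ x ∈ M, ∀ y ∈ π.getD (j + 1) ∅, y < x) ∧
    ∃ k₀ < μ.length,
      (∃ m ∈ M, (∀ x ∈ M, m ≤ x) ∧ m ∈ μ.getD k₀ ∅) ∧
      ∀ i, k₀ ≤ i → i < μ.length → π.getD (j + 1) ∅ ∩ μ.getD i ∅ = ∅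

/-- A right shift of a face at index `j`: an admissible `M`-shift on the first
partition, admissibility taken with respect to the reverse of the second. -/
def RightShift (f g : Face) (j : ℕ) : Prop :=
  ∃ M, Admissible f.1 f.2.reverse j M ∧ g = (blockShift f.1 j M, f.2)

/-- A down shift of a face at index `j`: an admissible `M`-shift on the reverse of
the second partition, admissibility taken with respect to the first. -/
def DownShift (f g : Face) (j : ℕ) : Prop :=
  ∃ M, Admissible f.2.reverse f.1 j M ∧ g = (f.1, (blockShift f.2.reverse j M).reverse)

/-- A sequence of shifts of the given kind, performed at strictly increasing indices,
all of which are at least `i`. -/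
inductive ShiftSeq (step : Face → Face → ℕ → Prop) : ℕ → Face → Face → Prop
  | refl (i : ℕ) (f : Face) : ShiftSeq step i f f
  | cons (i j : ℕ) (f g h : Face) : i ≤ j → step f g j →
      ShiftSeq step (j + 1) g h → ShiftSeq step i f h

/-- `g` is a derived face of `f`: obtained by a sequence of right shifts at strictly
increasing indices followed by a sequence of down shifts at strictly increasing
indices. -/
def IsDerivedFace (f g : Face) : Prop :=
  ∃ m : Face, ShiftSeq RightShift 0 f m ∧ ShiftSeq DownShift 0 m g

/-- The Saneblidze–Umble diagonal term set `Δ_n`: all derived faces of step matrix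
faces of permutations of `{1,…,n}`. -/
def SUDiagonal (n : ℕ) : Set Face :=
  {f | ∃ σ : Equiv.Perm (Fin n), IsDerivedFace (stepFace n σ) f}

/-- An ordered partition is derived consecutive if for each `j`, the integer interval
`[min π_j, max π_j]` is contained in `π_1 ∪ … ∪ π_j`. -/
def DerivedConsecutive (π : List (Finset ℕ)) : Prop :=
  ∀ j < π.length, ∀ x : ℕ,
    (∃ a ∈ π.getD j ∅, a ≤ x) → (∃ b ∈ π.getD j ∅, x ≤ b) →
    x ∈ (π.take (j + 1)).foldr (· ∪ ·) ∅

/-- The associahedron term set `K_n`: the faces of `Δ_n` in which both ordered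
partitions are derived consecutive. -/
def AssocTerms (n : ℕ) : Set Face :=
  {f ∈ SUDiagonal n | DerivedConsecutive f.1 ∧ DerivedConsecutive f.2}

/-! Shifts never change the number of blocks and a shift at index `j` needs a block after
the `j`-th one, while an admissible set is a subset of a block. Hence the derived faces of a
face are found by an explicit finite search, `Δ_n` and `K_n` are images of explicit
finite sets, and for `n = 4` the 22 elements are counted by evaluation in the kernel. -/

instance (π μ : List (Finset ℕ)) (j : ℕ) (M : Finset ℕ) : Decidable (Admissible π μ j M) := by
  unfold Admissible; infer_instance

theorem derivedConsecutive_iff {π : List (Finset ℕ)} : DerivedConsecutive π ↔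
    ∀ j < π.length, ∀ b ∈ π.getD j ∅, ∀ x ≤ b, (∃ a ∈ π.getD j ∅, a ≤ x) →
      x ∈ (π.take (j + 1)).foldr (· ∪ ·) ∅ :=
  forall₂_congr fun _ _ => ⟨fun h b hb x hx ha => h x ha ⟨b, hb, hx⟩,
    fun h x ha ⟨b, hb, hx⟩ => h b hb x hx ha⟩

instance : DecidablePred DerivedConsecutive := fun _ =>
  decidable_of_iff _ derivedConsecutive_iff.symm

theorem length_blockShift (π : List (Finset ℕ)) (j : ℕ) (M : Finset ℕ) :
    (blockShift π j M).length = π.length := by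
  simp only [blockShift, List.length_set]

theorem Admissible.subset {π μ : List (Finset ℕ)} {j : ℕ} {M : Finset ℕ}
    (h : Admissible π μ j M) : M ⊆ π.getD j ∅ :=
  h.2.2.1.subset

theorem Admissible.lt_length {π μ : List (Finset ℕ)} {j : ℕ} {M : Finset ℕ}
    (h : Admissible π μ j M) : j < π.length :=
  Nat.lt_of_succ_lt h.1

namespace ShiftSeq

variable {step : Face → Face → ℕ → Prop}

theorem of_le {i i' : ℕ} {f g : Face} (h : ShiftSeq step i' f g) (hi : i ≤ i') :
    ShiftSeq step i f g := by
  cases h with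
  | refl => exact refl i f
  | cons _ j _ g' _ hj hstep hrest => exact cons i j f g' g (hi.trans hj) hstep hrest

end ShiftSeq

/-- Faces reachable from `f` by shifts at strictly increasing indices in `[i, i + fuel)`. -/
def shiftClosure (shifts : Face → ℕ → Finset Face) : ℕ → ℕ → Face → Finset Face
  | 0, _, f => {f}
  | fuel + 1, i, f =>
    (shifts f i).biUnion (shiftClosure shifts fuel (i + 1)) ∪ shiftClosure shifts fuel (i + 1) f

section ShiftClosure

variable {step : Face → Face → ℕ → Prop} {shifts : Face → ℕ → Finset Face} {len : Face → ℕ}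

theorem mem_shiftClosure_iff (mem_shifts : ∀ f g j, g ∈ shifts f j ↔ step f g j)
    (len_eq : ∀ f g j, step f g j → len g = len f) (lt_len : ∀ f g j, step f g j → j < len f)
    (fuel : ℕ) {i : ℕ} {f g : Face} (hfuel : len f ≤ i + fuel) :
    g ∈ shiftClosure shifts fuel i f ↔ ShiftSeq step i f g := by
  induction fuel generalizing i f with
  | zero =>
    rw [shiftClosure, Finset.mem_singleton]
    refine ⟨by rintro rfl; exact .refl i g, fun h => ?_⟩
    cases h with
    | refl => rfl
    | cons _ j _ _ _ hj hstep _ => have := lt_len _ _ _ hstep; omega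
  | succ fuel ih =>
    simp only [shiftClosure, Finset.mem_union, Finset.mem_biUnion]
    constructor
    · rintro (⟨g', hg', hg⟩ | hg)
      · have hstep := (mem_shifts f g' i).1 hg'
        have hlen := len_eq _ _ _ hstep
        exact .cons i i f g' g le_rfl hstep ((ih (by omega)).1 hg)
      · exact ((ih (by omega)).1 hg).of_le (Nat.le_succ i)
    · intro h
      cases h with
      | refl => exact Or.inr ((ih (by omega)).2 (.refl _ _))
      | cons _ j _ g' _ hj hstep hrest =>
        rcases hj.eq_or_lt with rfl | hlt
        · have hlen := len_eq _ _ _ hstep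
          exact Or.inl ⟨g', (mem_shifts _ _ _).2 hstep, (ih (by omega)).2 hrest⟩
        · exact Or.inr ((ih (by omega)).2 (.cons _ j f g' g hlt hstep hrest))

end ShiftClosure

def rightShifts (f : Face) (j : ℕ) : Finset Face :=
  ((f.1.getD j ∅).powerset.filter (Admissible f.1 f.2.reverse j)).image
    fun M => (blockShift f.1 j M, f.2)

def downShifts (f : Face) (j : ℕ) : Finset Face :=
  ((f.2.reverse.getD j ∅).powerset.filter (Admissible f.2.reverse f.1 j)).image
    fun M => (f.1, (blockShift f.2.reverse j M).reverse)

theorem mem_rightShifts {f g : Face} {j : ℕ} : g ∈ rightShifts f j ↔ RightShift f g j := by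
  simp only [rightShifts, Finset.mem_image, Finset.mem_filter, Finset.mem_powerset]
  exact ⟨fun ⟨M, ⟨_, hM⟩, hg⟩ => ⟨M, hM, hg.symm⟩, fun ⟨M, hM, hg⟩ => ⟨M, ⟨hM.subset, hM⟩, hg.symm⟩⟩

theorem mem_downShifts {f g : Face} {j : ℕ} : g ∈ downShifts f j ↔ DownShift f g j := by
  simp only [downShifts, Finset.mem_image, Finset.mem_filter, Finset.mem_powerset]
  exact ⟨fun ⟨M, ⟨_, hM⟩, hg⟩ => ⟨M, hM, hg.symm⟩, fun ⟨M, hM, hg⟩ => ⟨M, ⟨hM.subset, hM⟩, hg.symm⟩⟩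

theorem RightShift.length_eq {f g : Face} {j : ℕ} (h : RightShift f g j) :
    g.1.length = f.1.length := by
  obtain ⟨M, -, rfl⟩ := h
  exact length_blockShift ..

theorem DownShift.length_eq {f g : Face} {j : ℕ} (h : DownShift f g j) :
    g.2.length = f.2.length := by
  obtain ⟨M, -, rfl⟩ := h
  simp only [List.length_reverse, length_blockShift]

theorem RightShift.lt_length {f g : Face} {j : ℕ} (h : RightShift f g j) : j < f.1.length :=
  h.choose_spec.1.lt_length

theorem DownShift.lt_length {f g : Face} {j : ℕ} (h : DownShift f g j) : j < f.2.length :=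
  f.2.length_reverse ▸ h.choose_spec.1.lt_length

def derivedFaces (f : Face) : Finset Face :=
  (shiftClosure rightShifts f.1.length 0 f).biUnion
    fun m => shiftClosure downShifts m.2.length 0 m

theorem mem_derivedFaces {f g : Face} : g ∈ derivedFaces f ↔ IsDerivedFace f g := by
  simp only [derivedFaces, Finset.mem_biUnion, IsDerivedFace]
  refine exists_congr fun m => and_congr ?_ ?_
  · exact mem_shiftClosure_iff (fun _ _ _ => mem_rightShifts) (fun _ _ _ => RightShift.length_eq)
      (fun _ _ _ => RightShift.lt_length) _ (Nat.zero_add _).ge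
  · exact mem_shiftClosure_iff (fun _ _ _ => mem_downShifts) (fun _ _ _ => DownShift.length_eq)
      (fun _ _ _ => DownShift.lt_length) _ (Nat.zero_add _).ge

def assocTermsFinset (n : ℕ) : Finset Face :=
  (Finset.univ.biUnion fun σ : Equiv.Perm (Fin n) => derivedFaces (stepFace n σ)).filter
    fun f => DerivedConsecutive f.1 ∧ DerivedConsecutive f.2

theorem coe_assocTermsFinset (n : ℕ) : ↑(assocTermsFinset n) = AssocTerms n := by
  ext f
  simp [assocTermsFinset, AssocTerms, SUDiagonal, mem_derivedFaces]

/-- The associahedron term set K_4, consisting of the faces (p, q) of Δ_4 with both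
p and q derived consecutive, has exactly 22 elements. -/
theorem assocTerms_card_4 : (AssocTerms 4).ncard = 22 := by
  rw [← coe_assocTermsFinset, Set.ncard_coe_finset]
  decide +kernel
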